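/- (Gow) Let N ⊴ G, θ ∈ Irr(N), and t ∈ G with t² ∈ N. Then the Gow indicator ε_t(θ) := (1/|N|) Σ_{n∈N} θ((nt)²) takes only the values 0, 1 or −1; moreover ε_t(θ) ≠ 0 if and only if θ^t = conj(θ). -/

import Mathlib

open scoped Classical

noncomputable section Defs

/-- `χ` is the character of some finite-dimensional complex representation of `G`. -/
def IsChar (G : Type*) [Group G] [Fintype G] (χ : G → ℂ) : Prop :=
  ∃ (n : ℕ) (ρ : Representation ℂ G (Fin n → ℂ)),
    ∀ g : G, χ g = LinearMap.trace ℂ (Fin n → ℂ) (ρ g)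

/-- `χ` is an irreducible character of `G` (a character of norm one). -/
def IsIrrChar (G : Type*) [Group G] [Fintype G] (χ : G → ℂ) : Prop :=
  IsChar G χ ∧ ∑ g : G, χ g * (starRingEnd ℂ) (χ g) = (Fintype.card G : ℂ)

/-- `χ` is a real-valued class function. -/
def IsRealChar (G : Type*) (χ : G → ℂ) : Prop :=
  ∀ g : G, (starRingEnd ℂ) (χ g) = χ g

variable {G : Type*} [Group G] [Fintype G]

/-- extension of a function on a subgroup by zero. -/
def ext0 (H : Subgroup G) (θ : ↥H → ℂ) (g : G) : ℂ :=
  if h : g ∈ H then θ ⟨g, h⟩ else 0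

/-- the character of `G` induced from the character `θ` of the subgroup `H`. -/
def Ind (H : Subgroup G) (θ : ↥H → ℂ) (g : G) : ℂ :=
  (∑ x : G, ext0 H θ (x * g * x⁻¹)) / (Nat.card H : ℂ)

/-- the character of an intermediate subgroup `K` (with `H ≤ K`) induced from `θ` on `H`. -/
def IndTo (H K : Subgroup G) (θ : ↥H → ℂ) (k : ↥K) : ℂ :=
  (∑ x : ↥K, ext0 H θ (↑x * ↑k * (↑x)⁻¹)) / (Nat.card H : ℂ)

/-- the usual inner product of class functions on `H`. -/
def innerChar (H : Subgroup G) (φ ψ : ↥H → ℂ) : ℂ :=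
  (∑ h : ↥H, φ h * (starRingEnd ℂ) (ψ h)) / (Nat.card H : ℂ)

/-- the conjugate character `θ^g : n ↦ θ (g n g⁻¹)`. -/
def conjChar (H : Subgroup G) (θ : ↥H → ℂ) (g : G) : ↥H → ℂ :=
  fun n => ext0 H θ (g * ↑n * g⁻¹)

/-- the Frobenius–Schur indicator. -/
def FSind (H : Type*) [Group H] [Fintype H] (χ : H → ℂ) : ℂ :=
  (∑ h : H, χ (h ^ 2)) / (Fintype.card H : ℂ)

/-- the Gow indicator `ε_t(θ) = (1/|N|) ∑_{n ∈ N} θ((nt)²)`. -/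
def Gow (H : Subgroup G) (θ : ↥H → ℂ) (t : G) : ℂ :=
  (∑ n : ↥H, ext0 H θ ((↑n * t) ^ 2)) / (Nat.card H : ℂ)

end Defs

noncomputable section GowCore
open Matrix LinearMap
variable {d : ℕ}

/-- `X ↦ A * X * B` as a linear map on matrices. -/
noncomputable def conjMap (A B : Matrix (Fin d) (Fin d) ℂ) :
    Matrix (Fin d) (Fin d) ℂ →ₗ[ℂ] Matrix (Fin d) (Fin d) ℂ :=
  (LinearMap.mulRight ℂ B).comp (LinearMap.mulLeft ℂ A)

@[simp] lemma conjMap_apply (A B X : Matrix (Fin d) (Fin d) ℂ) :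
    conjMap A B X = A * X * B := rfl

noncomputable def transMap : Matrix (Fin d) (Fin d) ℂ →ₗ[ℂ] Matrix (Fin d) (Fin d) ℂ :=
  (Matrix.transposeLinearEquiv (Fin d) (Fin d) ℂ ℂ).toLinearMap

@[simp] lemma transMap_apply (X : Matrix (Fin d) (Fin d) ℂ) : transMap X = Xᵀ := rfl

lemma stdBasis_repr (M : Matrix (Fin d) (Fin d) ℂ) (p : Fin d × Fin d) :
    (Matrix.stdBasis ℂ (Fin d) (Fin d)).repr M p = M p.1 p.2 := by
  simp [Matrix.stdBasis, Module.Basis.map_repr, Module.Basis.repr_reindex_apply, Pi.basis_repr,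
    Matrix.ofLinearEquiv]

lemma matrix_trace_map (f : Matrix (Fin d) (Fin d) ℂ →ₗ[ℂ] Matrix (Fin d) (Fin d) ℂ) :
    LinearMap.trace ℂ _ f = ∑ p : Fin d × Fin d, f (Matrix.single p.1 p.2 1) p.1 p.2 := by
  rw [LinearMap.trace_eq_matrix_trace ℂ (Matrix.stdBasis ℂ (Fin d) (Fin d)) f, Matrix.trace]
  refine Finset.sum_congr rfl fun p _ => ?_
  rw [Matrix.diag, LinearMap.toMatrix_apply, Matrix.stdBasis_eq_single, stdBasis_repr]

lemma trace_conjMap (A B : Matrix (Fin d) (Fin d) ℂ) :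
    LinearMap.trace ℂ _ (conjMap A B) = A.trace * B.trace := by
  rw [matrix_trace_map]
  have : ∀ p : Fin d × Fin d, (A * Matrix.single p.1 p.2 (1:ℂ) * B : Matrix (Fin d) (Fin d) ℂ) p.1 p.2 = A p.1 p.1 * B p.2 p.2 := by
    intro p
    simp [Matrix.mul_apply, Matrix.single, Finset.mul_sum, Finset.sum_ite_eq,
      Finset.sum_ite_eq', mul_ite, ite_mul, ite_and]
  simp only [conjMap_apply, this]
  rw [Matrix.trace, Matrix.trace, Finset.sum_mul_sum, Fintype.sum_prod_type]
  rfl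

lemma trace_conjTransMap (A B : Matrix (Fin d) (Fin d) ℂ) :
    LinearMap.trace ℂ _ ((conjMap A B).comp transMap) = (A * Bᵀ).trace := by
  rw [matrix_trace_map]
  have : ∀ p : Fin d × Fin d,
      (A * (Matrix.single p.1 p.2 (1:ℂ))ᵀ * B : Matrix (Fin d) (Fin d) ℂ) p.1 p.2
        = A p.1 p.2 * B p.1 p.2 := by
    intro p
    simp [Matrix.mul_apply, Matrix.single, Matrix.transpose_apply, Finset.mul_sum,
      Finset.sum_ite_eq, Finset.sum_ite_eq', mul_ite, ite_mul, ite_and]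
  simp only [LinearMap.comp_apply, transMap_apply, conjMap_apply, this]
  rw [Fintype.sum_prod_type]
  simp [Matrix.trace, Matrix.diag, Matrix.mul_apply, Matrix.transpose_apply]

open scoped Classical

lemma gow_core {H : Type*} [Group H] [Fintype H] {d : ℕ}
    (R : H →* Matrix (Fin d) (Fin d) ℂ) (τ : H ≃* H) (s : H)
    (hτs : τ s = s) (hττ : ∀ h : H, τ (τ h) * s = s * h)
    (hnorm : ∑ h : H, (R h).trace * (starRingEnd ℂ) ((R h).trace) = (Fintype.card H : ℂ)) :
    ((∑ h : H, (R (h * τ h * s)).trace) / (Fintype.card H : ℂ) = 0 ∨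
      (∑ h : H, (R (h * τ h * s)).trace) / (Fintype.card H : ℂ) = 1 ∨
      (∑ h : H, (R (h * τ h * s)).trace) / (Fintype.card H : ℂ) = -1) ∧
    ((∑ h : H, (R (h * τ h * s)).trace) / (Fintype.card H : ℂ) ≠ 0 ↔
      ∀ h : H, (R (τ h)).trace = (starRingEnd ℂ) ((R h).trace)) := by
  set c : ℂ := (Fintype.card H : ℂ) with hc_def
  have hc : c ≠ 0 := Nat.cast_ne_zero.mpr Fintype.card_ne_zero
  set ε : ℂ := (∑ h : H, (R (h * τ h * s)).trace) / c with hε_def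
  -- the averaging operator
  set T : Matrix (Fin d) (Fin d) ℂ →ₗ[ℂ] Matrix (Fin d) (Fin d) ℂ :=
    c⁻¹ • ∑ h : H, conjMap ((R h)ᵀ) (R (τ h)) with hT_def
  have hTX : ∀ X, T X = c⁻¹ • ∑ h : H, (R h)ᵀ * X * R (τ h) := by
    intro X
    simp [hT_def, LinearMap.sum_apply]
  -- invariance predicate
  have summand_mul : ∀ (m h : H) (X : Matrix (Fin d) (Fin d) ℂ),
      (R m)ᵀ * ((R h)ᵀ * X * R (τ h)) * R (τ m) = (R (h * m))ᵀ * X * R (τ (h * m)) := by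
    intro m h X
    simp only [_root_.map_mul, Matrix.transpose_mul, Matrix.mul_assoc]
  have hTinv : ∀ (X : Matrix (Fin d) (Fin d) ℂ) (m : H),
      (R m)ᵀ * T X * R (τ m) = T X := by
    intro X m
    rw [hTX, Matrix.mul_smul, Matrix.smul_mul, Finset.mul_sum, Finset.sum_mul]
    congr 1
    calc ∑ h : H, (R m)ᵀ * ((R h)ᵀ * X * R (τ h)) * R (τ m)
        = ∑ h : H, (R (h * m))ᵀ * X * R (τ (h * m)) := by
          exact Finset.sum_congr rfl fun h _ => summand_mul m h X
      _ = ∑ h : H, (R h)ᵀ * X * R (τ h) := by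
          exact Equiv.sum_comp (Equiv.mulRight m) (fun h => (R h)ᵀ * X * R (τ h))
  have hTfix : ∀ (B : Matrix (Fin d) (Fin d) ℂ),
      (∀ m : H, (R m)ᵀ * B * R (τ m) = B) → T B = B := by
    intro B hB
    rw [hTX]
    simp only [hB, Finset.sum_const, Finset.card_univ]
    rw [← Nat.cast_smul_eq_nsmul ℂ, smul_smul, ← hc_def, inv_mul_cancel₀ hc, one_smul]
  have hT_idem : ∀ X, T (T X) = T X := fun X => hTfix (T X) (hTinv X)
  have hProjT : LinearMap.IsProj (LinearMap.range T) T :=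
    ⟨fun x => LinearMap.mem_range_self T x, by
      rintro x ⟨y, rfl⟩; exact hT_idem y⟩
  -- trace of T
  have htraceT : LinearMap.trace ℂ _ T = c⁻¹ * ∑ h : H, (R h).trace * (R (τ h)).trace := by
    rw [hT_def, _root_.map_smul, map_sum]
    simp only [trace_conjMap, Matrix.trace_transpose, smul_eq_mul]
  -- the transposed-twisted operator F with trace ε
  set F : Matrix (Fin d) (Fin d) ℂ →ₗ[ℂ] Matrix (Fin d) (Fin d) ℂ :=
    T ∘ₗ (LinearMap.mulLeft ℂ ((R s)ᵀ)) ∘ₗ transMap with hF_def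
  have hFX : ∀ X, F X = T ((R s)ᵀ * Xᵀ) := fun X => rfl
  have hF_alt : F = c⁻¹ • ∑ h : H, (conjMap ((R (s * h))ᵀ) (R (τ h))).comp transMap := by
    apply LinearMap.ext; intro X
    rw [hFX, hTX]
    simp only [LinearMap.smul_apply, LinearMap.sum_apply, LinearMap.comp_apply,
      transMap_apply, conjMap_apply, _root_.map_mul, Matrix.transpose_mul, Matrix.mul_assoc]
  have htraceF : LinearMap.trace ℂ _ F = ε := by
    rw [hF_alt, _root_.map_smul, map_sum]
    simp only [trace_conjTransMap, smul_eq_mul, hε_def, div_eq_inv_mul]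
    congr 1
    refine Finset.sum_congr rfl fun h _ => ?_
    rw [← Matrix.transpose_mul, ← _root_.map_mul, Matrix.trace_transpose]
    have h1 : τ h * (s * h) = τ h * s * h := by group
    have h2 : h * τ h * s = h * (τ h * s) := by group
    rw [h1, h2, _root_.map_mul, _root_.map_mul, Matrix.trace_mul_comm]
    simp [_root_.map_mul, Matrix.mul_assoc]
  -- inner product estimates
  set f : EuclideanSpace ℂ H := WithLp.toLp 2 (fun h => (starRingEnd ℂ) ((R h).trace)) with hf_def
  set g : EuclideanSpace ℂ H := WithLp.toLp 2 (fun h => (R (τ h)).trace) with hg_def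
  have hip : ∀ (u v : EuclideanSpace ℂ H),
      (inner ℂ u v : ℂ) = ∑ h : H, (starRingEnd ℂ) (u h) * v h := fun u v => by
        rw [PiLp.inner_apply]; exact Finset.sum_congr rfl fun _ _ => by rw [RCLike.inner_apply]; ring
  have hff : (inner ℂ f f : ℂ) = c := by
    rw [hip, ← hnorm]
    exact Finset.sum_congr rfl fun h _ => by simp [hf_def, mul_comm]
  have hgg : (inner ℂ g g : ℂ) = c := by
    rw [hip, ← hnorm]
    calc ∑ h : H, (starRingEnd ℂ) ((R (τ h)).trace) * (R (τ h)).trace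
        = ∑ h : H, (starRingEnd ℂ) ((R h).trace) * (R h).trace :=
          Equiv.sum_comp τ.toEquiv (fun h => (starRingEnd ℂ) ((R h).trace) * (R h).trace)
      _ = ∑ h : H, (R h).trace * (starRingEnd ℂ) ((R h).trace) := by
          exact Finset.sum_congr rfl fun h _ => mul_comm _ _
  have hfg : (inner ℂ f g : ℂ) = ∑ h : H, (R h).trace * (R (τ h)).trace := by
    rw [hip]
    exact Finset.sum_congr rfl fun h _ => by simp [hf_def, hg_def]
  have hnf : ‖f‖ ^ 2 = (Fintype.card H : ℝ) := by
    have := inner_self_eq_norm_sq_to_K (𝕜 := ℂ) f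
    rw [hff, hc_def] at this
    have h2 : ((‖f‖ ^ 2 : ℝ) : ℂ) = ((Fintype.card H : ℝ) : ℂ) := by
      push_cast
      exact this.symm
    exact_mod_cast h2
  have hng : ‖g‖ ^ 2 = (Fintype.card H : ℝ) := by
    have := inner_self_eq_norm_sq_to_K (𝕜 := ℂ) g
    rw [hgg, hc_def] at this
    have h2 : ((‖g‖ ^ 2 : ℝ) : ℂ) = ((Fintype.card H : ℝ) : ℂ) := by
      push_cast
      exact this.symm
    exact_mod_cast h2
  have hnfg : ‖f‖ * ‖g‖ = (Fintype.card H : ℝ) := by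
    have h1 : ‖f‖ = Real.sqrt (Fintype.card H) := by
      rw [← hnf, Real.sqrt_sq (norm_nonneg f)]
    have h2 : ‖g‖ = Real.sqrt (Fintype.card H) := by
      rw [← hng, Real.sqrt_sq (norm_nonneg g)]
    rw [h1, h2, Real.mul_self_sqrt (Nat.cast_nonneg _)]
  have hCS : ‖(∑ h : H, (R h).trace * (R (τ h)).trace : ℂ)‖ ≤ (Fintype.card H : ℝ) := by
    rw [← hfg, ← hnfg]
    exact norm_inner_le_norm f g
  have hEq : (∑ h : H, (R h).trace * (R (τ h)).trace) = c → ∀ h : H,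
      (R (τ h)).trace = (starRingEnd ℂ) ((R h).trace) := by
    intro hS
    have hre : RCLike.re (inner ℂ f g : ℂ) = (Fintype.card H : ℝ) := by
      rw [hfg, hS, hc_def]
      simp
    have h0 : ‖f - g‖ ^ 2 = 0 := by
      rw [norm_sub_sq (𝕜 := ℂ) f g, hnf, hng, hre]
      ring
    have : f = g := by
      have := (pow_eq_zero_iff (n := 2) (by norm_num)).mp h0
      rw [norm_eq_zero, sub_eq_zero] at this
      exact this
    intro h
    have := congrArg (fun x : EuclideanSpace ℂ H => x h) this
    rw [hf_def, hg_def] at this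
    exact this.symm
  -- rank of T
  have htrT_r : LinearMap.trace ℂ _ T = (Module.finrank ℂ (LinearMap.range T) : ℂ) :=
    hProjT.trace
  have hr01 : Module.finrank ℂ (LinearMap.range T) = 0 ∨
      Module.finrank ℂ (LinearMap.range T) = 1 := by
    have habs : ‖(Module.finrank ℂ (LinearMap.range T) : ℂ)‖ ≤ 1 := by
      rw [← htrT_r, htraceT, hc_def, norm_mul]
      have h1 : ‖((Fintype.card H : ℂ))⁻¹‖ = ((Fintype.card H : ℝ))⁻¹ := by
        rw [norm_inv]
        norm_num
      have hcard : (0:ℝ) < (Fintype.card H : ℝ) := by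
        exact_mod_cast Fintype.card_pos
      rw [h1, inv_mul_le_iff₀ hcard, mul_one]
      exact hCS
    have h9 : ((Module.finrank ℂ (LinearMap.range T) : ℕ) : ℝ) ≤ 1 := by
      have h8 : ‖((Module.finrank ℂ (LinearMap.range T) : ℕ) : ℂ)‖
          = ((Module.finrank ℂ (LinearMap.range T) : ℕ) : ℝ) := by simp
      linarith [habs, h8.symm.le]
    have : (Module.finrank ℂ (LinearMap.range T) : ℕ) ≤ 1 := by exact_mod_cast h9
    omega
  rcases hr01 with hr | hr
  · -- rank 0 : T = 0, ε = 0, characters not conjugate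
    have hrange : LinearMap.range T = ⊥ := Submodule.finrank_eq_zero.mp hr
    have hT0 : T = 0 := LinearMap.range_eq_bot.mp hrange
    have hε0 : ε = 0 := by
      rw [← htraceF, hF_def, hT0]
      simp
    have hnP : ¬ (∀ h : H, (R (τ h)).trace = (starRingEnd ℂ) ((R h).trace)) := by
      intro hP
      have h1 : LinearMap.trace ℂ _ T = 1 := by
        rw [htraceT]
        have h2 : ∑ h : H, (R h).trace * (R (τ h)).trace = c := by
          rw [← hnorm]
          exact Finset.sum_congr rfl fun h _ => by rw [hP h]
        rw [h2, inv_mul_cancel₀ hc]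
      rw [htrT_r, hr] at h1
      norm_num at h1
    refine ⟨Or.inl hε0, ?_⟩
    constructor
    · intro h; exact absurd hε0 h
    · intro hP; exact absurd hP hnP
  · -- rank 1
    have htr1 : LinearMap.trace ℂ _ T = 1 := by rw [htrT_r, hr]; norm_num
    have hS : ∑ h : H, (R h).trace * (R (τ h)).trace = c := by
      have h1 : c⁻¹ * ∑ h : H, (R h).trace * (R (τ h)).trace = 1 := by
        rw [← htraceT, htr1]
      field_simp at h1
      linear_combination h1
    have hP : ∀ h : H, (R (τ h)).trace = (starRingEnd ℂ) ((R h).trace) := hEq hS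
    have hrne : LinearMap.range T ≠ ⊥ := by
      intro h
      rw [h, finrank_bot] at hr
      exact zero_ne_one hr
    obtain ⟨B₀, hB₀mem, hB₀ne⟩ := Submodule.exists_mem_ne_zero_of_ne_bot hrne
    have hspan : LinearMap.range T = Submodule.span ℂ {B₀} := by
      refine (Submodule.eq_of_le_of_finrank_le
        (Submodule.span_le.mpr (Set.singleton_subset_iff.mpr hB₀mem)) ?_).symm
      rw [finrank_span_singleton hB₀ne, hr]
    have hmem_span : ∀ X, F X ∈ Submodule.span ℂ {B₀} := fun X => by
      rw [← hspan]
      exact ⟨(R s)ᵀ * Xᵀ, (hFX X).symm⟩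
    have hB₀inv : ∀ m : H, (R m)ᵀ * B₀ * R (τ m) = B₀ := by
      obtain ⟨y, hy⟩ := hB₀mem
      intro m
      rw [← hy]
      exact hTinv y m
    have hB₀invT : ∀ m : H, (R (τ m))ᵀ * B₀ᵀ * R m = B₀ᵀ := by
      intro m
      have h1 := congrArg Matrix.transpose (hB₀inv m)
      rw [Matrix.transpose_mul, Matrix.transpose_mul, Matrix.transpose_transpose] at h1
      rw [← Matrix.mul_assoc] at h1
      exact h1
    set C : Matrix (Fin d) (Fin d) ℂ := (R s)ᵀ * B₀ᵀ with hC_def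
    have hCinv : ∀ m : H, (R m)ᵀ * C * R (τ m) = C := by
      intro m
      have key : (R s)ᵀ * (R (τ (τ m)))ᵀ = (R m)ᵀ * (R s)ᵀ := by
        rw [← Matrix.transpose_mul, ← Matrix.transpose_mul, ← _root_.map_mul,
          ← _root_.map_mul, hττ m]
      have h3 := hB₀invT (τ m)
      calc (R m)ᵀ * C * R (τ m)
          = (R m)ᵀ * (R s)ᵀ * B₀ᵀ * R (τ m) := by
            rw [hC_def, ← Matrix.mul_assoc]
        _ = (R s)ᵀ * (R (τ (τ m)))ᵀ * B₀ᵀ * R (τ m) := by rw [← key]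
        _ = (R s)ᵀ * ((R (τ (τ m)))ᵀ * B₀ᵀ * R (τ m)) := by
            simp only [Matrix.mul_assoc]
        _ = (R s)ᵀ * B₀ᵀ := by rw [h3]
    have hCmem : C ∈ LinearMap.range T := ⟨C, hTfix C hCinv⟩
    obtain ⟨lam, hlam⟩ := Submodule.mem_span_singleton.mp (hspan ▸ hCmem)
    have hsfix : (R s)ᵀ * B₀ * R s = B₀ := by
      have := hB₀inv s
      rwa [hτs] at this
    have hlam2 : lam ^ 2 = 1 := by
      have h4 : (R s)ᵀ * Cᵀ = B₀ := by
        rw [hC_def, Matrix.transpose_mul, Matrix.transpose_transpose,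
          ← Matrix.mul_assoc]
        exact hsfix
      have h5 : (R s)ᵀ * Cᵀ = lam ^ 2 • B₀ := by
        calc (R s)ᵀ * Cᵀ = (R s)ᵀ * (lam • B₀)ᵀ := by rw [hlam]
          _ = lam • ((R s)ᵀ * B₀ᵀ) := by rw [Matrix.transpose_smul, Matrix.mul_smul]
          _ = lam • C := by rw [hC_def]
          _ = lam • (lam • B₀) := by rw [← hlam]
          _ = lam ^ 2 • B₀ := by rw [smul_smul, sq]
      have h6 : lam ^ 2 • B₀ = (1 : ℂ) • B₀ := by rw [← h5, h4, one_smul]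
      exact smul_left_injective ℂ hB₀ne h6
    have hlamne : lam ≠ 0 := by
      intro h
      rw [h] at hlam2
      norm_num at hlam2
    have hFB₀ : F B₀ = lam • B₀ := by
      calc F B₀ = T C := by rw [hFX, hC_def]
        _ = C := hTfix C hCinv
        _ = lam • B₀ := hlam.symm
    have hproj : LinearMap.IsProj (Submodule.span ℂ {B₀}) (lam • F) := by
      constructor
      · intro X
        simp only [LinearMap.smul_apply]
        exact Submodule.smul_mem _ lam (hmem_span X)
      · intro X hX
        obtain ⟨a, ha⟩ := Submodule.mem_span_singleton.mp hX
        rw [← ha, LinearMap.smul_apply, _root_.map_smul, hFB₀, smul_smul, smul_smul]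
        have h7 : lam * a * lam = a * lam ^ 2 := by ring
        rw [h7, hlam2, mul_one]
    have htre : LinearMap.trace ℂ _ (lam • F) = 1 := by
      rw [hproj.trace, finrank_span_singleton hB₀ne]
      norm_num
    have hmul : lam * ε = 1 := by
      rw [_root_.map_smul, smul_eq_mul, htraceF] at htre
      exact htre
    have hεlam : ε = lam := by
      calc ε = lam ^ 2 * ε := by rw [hlam2, one_mul]
        _ = lam * (lam * ε) := by ring
        _ = lam * 1 := by rw [hmul]
        _ = lam := mul_one lam
    have hlampm : lam = 1 ∨ lam = -1 := by
      have h7 : (lam - 1) * (lam + 1) = 0 := by linear_combination hlam2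
      rcases mul_eq_zero.mp h7 with h | h
      · exact Or.inl (by linear_combination h)
      · exact Or.inr (by linear_combination h)
    refine ⟨?_, ?_⟩
    · rcases hlampm with h | h
      · exact Or.inr (Or.inl (by rw [hεlam, h]))
      · exact Or.inr (Or.inr (by rw [hεlam, h]))
    · constructor
      · intro _
        exact hP
      · intro _
        rw [hεlam]
        exact hlamne

end GowCore

lemma ext0_coe {G : Type*} [Group G] [Fintype G] (H : Subgroup G) (θ : ↥H → ℂ) (m : ↥H) :
    ext0 H θ ↑m = θ m := by
  show (if h : (↑m : G) ∈ H then θ ⟨↑m, h⟩ else 0) = θ m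
  rw [dif_pos m.2]

/-- Gow: for `t² ∈ N`, the Gow indicator `ε_t(θ)` is `0`, `1` or `-1`,
and it is nonzero iff `θ^t = conj θ`. -/
theorem stmt12 {G : Type*} [Group G] [Fintype G] (N : Subgroup G) [N.Normal]
    (θ : ↥N → ℂ) (hθ : IsIrrChar ↥N θ) (t : G) (ht2 : t ^ 2 ∈ N) :
    (Gow N θ t = 0 ∨ Gow N θ t = 1 ∨ Gow N θ t = -1) ∧
      (Gow N θ t ≠ 0 ↔ conjChar N θ t = fun n => (starRingEnd ℂ) (θ n)) := by
  obtain ⟨⟨d, ρ, hρ⟩, hnormθ⟩ := hθ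
  set R : ↥N →* Matrix (Fin d) (Fin d) ℂ :=
    { toFun := fun n => LinearMap.toMatrixAlgEquiv' (ρ n)
      map_one' := by
        show LinearMap.toMatrixAlgEquiv' (ρ 1) = 1
        rw [_root_.map_one, _root_.map_one]
      map_mul' := fun a b => by
        show LinearMap.toMatrixAlgEquiv' (ρ (a * b))
          = LinearMap.toMatrixAlgEquiv' (ρ a) * LinearMap.toMatrixAlgEquiv' (ρ b)
        rw [_root_.map_mul, _root_.map_mul] } with hR_def
  have hχ : ∀ m : ↥N, θ m = (R m).trace := by
    intro m
    rw [hρ m, LinearMap.trace_eq_matrix_trace ℂ (Pi.basisFun ℂ (Fin d)) (ρ m),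
      LinearMap.toMatrix_eq_toMatrix']
    rfl
  set τ : ↥N ≃* ↥N := MulAut.conjNormal t with hτ_def
  have hcoeτ : ∀ n : ↥N, ((τ n : ↥N) : G) = t * n * t⁻¹ := fun n =>
    MulAut.conjNormal_apply t n
  set s₀ : ↥N := ⟨t ^ 2, ht2⟩ with hs₀_def
  have hcoes : ((s₀ : ↥N) : G) = t ^ 2 := rfl
  have hτs : τ s₀ = s₀ := by
    apply Subtype.ext
    rw [hcoeτ, hcoes]
    group
  have hττ : ∀ h : ↥N, τ (τ h) * s₀ = s₀ * h := by
    intro h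
    apply Subtype.ext
    rw [Subgroup.coe_mul, Subgroup.coe_mul, hcoeτ, hcoeτ, hcoes, pow_two]
    group
  have hnorm' : ∑ h : ↥N, (R h).trace * (starRingEnd ℂ) ((R h).trace)
      = (Fintype.card ↥N : ℂ) := by
    have := hnormθ
    simp only [hχ] at this
    exact this
  obtain ⟨hcases, hiff⟩ := gow_core R τ s₀ hτs hττ hnorm'
  have hGow : Gow N θ t = (∑ h : ↥N, (R (h * τ h * s₀)).trace) / (Fintype.card ↥N : ℂ) := by
    rw [Gow, Nat.card_eq_fintype_card]
    congr 1
    refine Finset.sum_congr rfl fun n _ => ?_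
    have hmem : ((n : G) * t) ^ 2 = ((n * τ n * s₀ : ↥N) : G) := by
      rw [Subgroup.coe_mul, Subgroup.coe_mul, hcoeτ, hcoes, pow_two, pow_two]
      group
    rw [hmem, ext0_coe, hχ]
  have hconj : (conjChar N θ t = fun n => (starRingEnd ℂ) (θ n)) ↔
      (∀ h : ↥N, (R (τ h)).trace = (starRingEnd ℂ) ((R h).trace)) := by
    rw [funext_iff]
    apply forall_congr'
    intro n
    have h1 : conjChar N θ t n = θ (τ n) := by
      show ext0 N θ (t * ↑n * t⁻¹) = θ (τ n)
      rw [← hcoeτ, ext0_coe]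
    rw [h1, hχ (τ n), hχ n]
  rw [hGow]
  exact ⟨hcases, hiff.trans hconj.symm⟩
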